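/- arXiv:2208.14753 — 3 statements merged into one kernel-verified Lean document; each statement's English description precedes it below -/
import Mathlib

section
/- Let g:(0,M) → (0,∞) be a strictly positive convex function with g(r) → +∞ as r → 0⁺ and as r → M⁻. Fix 0 < M̄ < M. Then there exists a constant C (depending on g and M̄) such that for every λ ∈ (1,2) and every r ∈ (0,M) with λr ≤ M̄, one has g(λr) ≤ (1 + C(λ-1)) g(r). -/
open Set Filter

/-- For a strictly positive convex function `g` on `(0,M)` blowing up at both
endpoints, and `0 < M̄ < M`, there is a constant `C` such that for every `λ ∈ (1,2)` and
every `r ∈ (0,M)` with `λ r ≤ M̄`, one has `g(λ r) ≤ (1 + C (λ - 1)) g(r)`. -/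
theorem dilation_estimate (M Mbar : ℝ) (hMbar0 : 0 < Mbar) (hMbarM : Mbar < M)
    (g : ℝ → ℝ)
    (hconv : ConvexOn ℝ (Ioo 0 M) g)
    (hpos : ∀ r ∈ Ioo (0:ℝ) M, 0 < g r)
    (hblow0 : Tendsto g (nhdsWithin 0 (Ioi 0)) atTop)
    (hblowM : Tendsto g (nhdsWithin M (Iio M)) atTop) :
    ∃ C : ℝ, ∀ lam ∈ Ioo (1:ℝ) 2, ∀ r ∈ Ioo (0:ℝ) M, lam * r ≤ Mbar →
      g (lam * r) ≤ (1 + C * (lam - 1)) * g r := by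
  set b : ℝ := (Mbar + M) / 2 with hbdef
  have hbMbar : Mbar < b := by rw [hbdef]; linarith
  have hbM : b < M := by rw [hbdef]; linarith
  have hb0 : 0 < b := lt_trans hMbar0 hbMbar
  have hgb : 0 < g b := hpos b ⟨hb0, hbM⟩
  -- near 0, g ≥ 1
  have h1 : ∀ᶠ x in nhdsWithin 0 (Ioi 0), 1 ≤ g x := hblow0.eventually_ge_atTop 1
  rw [eventually_nhdsWithin_iff, Metric.eventually_nhds_iff] at h1
  obtain ⟨δ0, hδ0pos, hδ0⟩ := h1
  set δ : ℝ := min (δ0 / 2) (Mbar / 2) with hδdef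
  have hδpos : 0 < δ := lt_min (by linarith) (by linarith)
  have hδMbar : δ < Mbar := lt_of_le_of_lt (min_le_right _ _) (by linarith)
  have hδsmall : ∀ x : ℝ, 0 < x → x ≤ δ → 1 ≤ g x := by
    intro x hx0 hxδ
    refine hδ0 ?_ hx0
    have : x ≤ δ0 / 2 := le_trans hxδ (min_le_left _ _)
    rw [Real.dist_eq]
    rw [abs_sub_lt_iff]
    constructor <;> linarith
  -- continuity and min on [δ, Mbar]
  have hcont : ContinuousOn g (Ioo 0 M) := hconv.continuousOn isOpen_Ioo
  have hsub : Icc δ Mbar ⊆ Ioo 0 M := fun x hx => ⟨lt_of_lt_of_le hδpos hx.1,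
    lt_of_le_of_lt hx.2 hMbarM⟩
  obtain ⟨x0, hx0mem, hx0min⟩ := (isCompact_Icc : IsCompact (Icc δ Mbar)).exists_isMinOn
    ⟨δ, le_refl δ, hδMbar.le⟩ (hcont.mono hsub)
  have hgx0 : 0 < g x0 := hpos x0 (hsub hx0mem)
  set m : ℝ := min 1 (g x0) with hmdef
  have hm0 : 0 < m := lt_min one_pos hgx0
  have hmle : ∀ x : ℝ, 0 < x → x ≤ Mbar → m ≤ g x := by
    intro x hx0 hxM
    rcases le_or_gt x δ with h | h
    · exact le_trans (min_le_left _ _) (hδsmall x hx0 h)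
    · exact le_trans (min_le_right _ _) (hx0min ⟨h.le, hxM⟩)
  obtain ⟨C, hCdef⟩ : ∃ C : ℝ, C = Mbar * g b / ((b - Mbar) * m) := ⟨_, rfl⟩
  have hd3 : (0:ℝ) < b - Mbar := by linarith
  have hC0 : (0:ℝ) ≤ C := by rw [hCdef]; positivity
  refine ⟨C, ?_⟩
  intro lam hlam r hr hlr
  obtain ⟨hlam1, hlam2⟩ := hlam
  obtain ⟨hr0, hrM⟩ := hr
  have hrlr : r < lam * r := by nlinarith
  have hlrb : lam * r < b := lt_of_le_of_lt hlr hbMbar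
  have hlr0 : 0 < lam * r := lt_trans hr0 hrlr
  have hglr : 0 < g (lam * r) := hpos _ ⟨hlr0, lt_trans hlrb hbM⟩
  have hgr : 0 < g r := hpos _ ⟨hr0, hrM⟩
  have hmr : m ≤ g r := hmle r hr0 (le_of_lt (lt_of_lt_of_le hrlr hlr))
  have hslope := hconv.slope_mono_adjacent ⟨hr0, hrM⟩ ⟨hb0, hbM⟩ hrlr hlrb
  have hd2 : (0:ℝ) < b - lam * r := by linarith
  have h1 : g (lam * r) - g r ≤ ((lam - 1) * r) * ((g b - g (lam * r)) / (b - lam * r)) := by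
    have hd : (0:ℝ) < lam * r - r := by linarith
    rw [div_le_iff₀ hd] at hslope
    calc g (lam * r) - g r ≤ (g b - g (lam * r)) / (b - lam * r) * (lam * r - r) := hslope
    _ = ((lam - 1) * r) * ((g b - g (lam * r)) / (b - lam * r)) := by ring
  have h2 : (g b - g (lam * r)) / (b - lam * r) ≤ g b / (b - Mbar) := by
    rw [div_le_div_iff₀ hd2 hd3]
    nlinarith [mul_le_mul_of_nonneg_left hlr hgb.le, mul_nonneg hglr.le hd3.le]
  have hrMbar : r ≤ Mbar := le_of_lt (lt_of_lt_of_le hrlr hlr)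
  have hlam1' : (0:ℝ) ≤ lam - 1 := by linarith
  have h3 : g (lam * r) - g r ≤ (lam - 1) * Mbar * (g b / (b - Mbar)) := by
    calc g (lam * r) - g r ≤ ((lam - 1) * r) * ((g b - g (lam * r)) / (b - lam * r)) := h1
    _ ≤ ((lam - 1) * r) * (g b / (b - Mbar)) := by
        apply mul_le_mul_of_nonneg_left h2 (by nlinarith)
    _ ≤ (lam - 1) * Mbar * (g b / (b - Mbar)) := by
        apply mul_le_mul_of_nonneg_right ?_ (by positivity)
        nlinarith
  have hkey : (lam - 1) * Mbar * (g b / (b - Mbar)) = C * (lam - 1) * m := by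
    rw [hCdef]; field_simp
  have h4 : g (lam * r) - g r ≤ C * (lam - 1) * g r := by
    calc g (lam * r) - g r ≤ (lam - 1) * Mbar * (g b / (b - Mbar)) := h3
    _ = C * (lam - 1) * m := hkey
    _ ≤ C * (lam - 1) * g r := by
        apply mul_le_mul_of_nonneg_left hmr (mul_nonneg hC0 hlam1')
  have hring : (1 + C * (lam - 1)) * g r = g r + C * (lam - 1) * g r := by ring
  linarith [h4, hring.ge]
end

section
/- Let μ ∈ 𝒫_p(ℝ) be an atomless probability measure with median x_μ = X_μ(1/2) = 0, let ε ∈ (0,1/2), let I_ε := [X_μ(ε), X_μ(1−ε)], and let C_ε μ := (1−2ε)^{-1} μ restricted to I_ε. Then W_p(μ, C_ε μ)^p ≤ ∫_{I_ε^c} |x|^p dμ(x). -/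
open Set MeasureTheory
open scoped ENNReal NNReal

/-- Quantile function of a probability measure on `ℝ`. -/
noncomputable def quantile (μ : Measure ℝ) (z : ℝ) : ℝ :=
  sInf {a : ℝ | z < (μ (Iio a)).toReal}

/-- The `p`-Wasserstein transport cost `W_p(μ,ν)^p`. -/
noncomputable def WpCost (p : ℝ) (μ ν : Measure ℝ) : ℝ≥0∞ :=
  sInf {c | ∃ π : Measure (ℝ × ℝ), IsProbabilityMeasure π ∧
    π.map Prod.fst = μ ∧ π.map Prod.snd = ν ∧
    c = ∫⁻ q, ENNReal.ofReal (|q.1 - q.2| ^ p) ∂π}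

/-- The compactification `C_ε μ = (1-2ε)⁻¹ μ|_{I_ε}` with
`I_ε = [X_μ(ε), X_μ(1-ε)]`. -/
noncomputable def compactify (ε : ℝ) (μ : Measure ℝ) : Measure ℝ :=
  (ENNReal.ofReal (1 - 2 * ε))⁻¹ • μ.restrict (Icc (quantile μ ε) (quantile μ (1 - ε)))

/-!
Couple `μ` with `C_ε μ` by leaving the mass inside `I_ε = [a, b]` in place and spreading
the left tail `(-∞, a)` over `[a, 0]` and the right tail `(b, ∞)` over `(0, b]`, each
proportionally to `μ`. Both tails have mass `ε` and both halves of `I_ε` have mass `1/2 - ε`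
(here atomlessness is used), so the second marginal is `(1 - 2ε)⁻¹ μ|_{I_ε}`. A tail point `x`
is sent to a point between `x` and the median `0`, hence travels at most `|x|`.
-/

open Filter Topology ProbabilityTheory

lemma Continuous.apply_sInf_setOf_lt {F : ℝ → ℝ} (hF : Continuous F) {z : ℝ}
    (hne : {a | z < F a}.Nonempty) (hbdd : BddBelow {a | z < F a}) :
    F (sInf {a | z < F a}) = z := by
  set S := {a | z < F a}
  refine le_antisymm (not_lt.1 fun hz => ?_)
    (closure_lt_subset_le continuous_const hF (csInf_mem_closure hne hbdd))
  obtain ⟨l, hl, hlS⟩ := exists_Ioc_subset_of_mem_nhds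
    ((isOpen_lt continuous_const hF).mem_nhds hz) (exists_lt _)
  have hmid : (l + sInf S) / 2 ∈ S := hlS ⟨by linarith, by linarith⟩
  linarith [csInf_le hbdd hmid]

section AtomlessQuantile

variable {μ : Measure ℝ} [IsProbabilityMeasure μ] [NullSingletonClass μ]

lemma continuous_cdf : Continuous (cdf μ) := by
  refine continuous_iff_continuousAt.2 fun x =>
    (monotone_cdf μ).continuousAt_iff_leftLim_eq_rightLim.2 ?_
  have hjump : ENNReal.ofReal (cdf μ x - Function.leftLim (cdf μ) x) = 0 := by
    rw [← StieltjesFunction.measure_singleton, measure_cdf, measure_singleton]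
  rw [ENNReal.ofReal_eq_zero] at hjump
  rw [(cdf μ).rightLim_eq]
  exact le_antisymm ((monotone_cdf μ).leftLim_le le_rfl) (by linarith)

lemma quantile_eq_sInf_cdf (z : ℝ) : quantile μ z = sInf {a | z < cdf μ a} := by
  simp only [quantile, cdf_eq_real, measureReal_def, measure_congr Iio_ae_eq_Iic]

lemma cdf_quantile {z : ℝ} (h0 : 0 < z) (h1 : z < 1) : cdf μ (quantile μ z) = z := by
  obtain ⟨b, hb⟩ :=
    eventually_atBot.1 ((tendsto_cdf_atBot μ).eventually (eventually_lt_nhds h0))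
  rw [quantile_eq_sInf_cdf]
  refine continuous_cdf.apply_sInf_setOf_lt
    ((tendsto_cdf_atTop μ).eventually (eventually_gt_nhds h1)).exists ⟨b, fun a ha => ?_⟩
  exact (not_le.1 fun hab => lt_asymm (hb a hab) ha).le

lemma quantile_le_quantile {z₁ z₂ : ℝ} (h0 : 0 < z₁) (hz : z₁ ≤ z₂) (h1 : z₂ < 1) :
    quantile μ z₁ ≤ quantile μ z₂ := by
  refine hz.eq_or_lt.elim (fun h => h ▸ le_rfl) fun hz => not_lt.1 fun hq => ?_
  have := monotone_cdf μ hq.le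
  rw [cdf_quantile h0 (hz.trans h1), cdf_quantile (h0.trans hz) h1] at this
  linarith

lemma measure_Iic_quantile {z : ℝ} (h0 : 0 < z) (h1 : z < 1) :
    μ (Iic (quantile μ z)) = ENNReal.ofReal z := by
  rw [← ofReal_cdf, cdf_quantile h0 h1]

lemma measure_Icc_quantile {z₁ z₂ : ℝ} (h0 : 0 < z₁) (hz : z₁ ≤ z₂) (h1 : z₂ < 1) :
    μ (Icc (quantile μ z₁) (quantile μ z₂)) = ENNReal.ofReal (z₂ - z₁) := by
  have h := (cdf μ).measure_Ioc (quantile μ z₁) (quantile μ z₂)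
  rwa [measure_cdf, measure_congr Ioc_ae_eq_Icc, cdf_quantile h0 (hz.trans_lt h1),
    cdf_quantile (h0.trans_le hz) h1] at h

end AtomlessQuantile

section SpreadPlan

variable {α : Type*} [MeasurableSpace α]

noncomputable def spreadPlan (μ : Measure α) (s t : Set α) : Measure (α × α) :=
  (μ.restrict t).map Function.diag + (μ.restrict s).prod μ[|t]

variable {μ : Measure α} {s t : Set α}

lemma lintegral_spreadPlan_le {c : α × α → ℝ≥0∞} (hc : Measurable c)
    (hc₀ : ∀ x, c (x, x) = 0)
    (hs : MeasurableSet s) (ht : MeasurableSet t) {f : α → ℝ≥0∞}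
    (hcf : ∀ x ∈ s, ∀ y ∈ t, c (x, y) ≤ f x) :
    ∫⁻ q, c q ∂spreadPlan μ s t ≤ ∫⁻ x in s, f x ∂μ := by
  rw [spreadPlan, lintegral_add_measure, lintegral_map hc measurable_diag,
    lintegral_prod _ hc.aemeasurable]
  simp only [Function.diag_apply, hc₀, lintegral_zero, zero_add]
  refine lintegral_mono_ae <| (ae_restrict_mem hs).mono fun x hx => ?_
  calc ∫⁻ y, c (x, y) ∂μ[|t] ≤ ∫⁻ _, f x ∂μ[|t] :=
        lintegral_mono_ae ((ae_cond_mem ht).mono fun y hy => hcf x hx y hy)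
    _ ≤ f x := by
        rw [lintegral_const]
        exact mul_le_of_le_one_right' prob_le_one

variable [IsFiniteMeasure μ]

lemma spreadPlan_map_fst (ht : MeasurableSet t) (ht₀ : μ t ≠ 0) (hst : Disjoint s t) :
    (spreadPlan μ s t).map Prod.fst = μ.restrict (s ∪ t) := by
  have := cond_isProbabilityMeasure (μ := μ) ht₀
  rw [spreadPlan, Measure.map_add _ _ measurable_fst, Measure.map_map measurable_fst
    measurable_diag, Function.fst_comp_diag, Measure.map_id, Measure.map_fst_prod, measure_univ,
    one_smul, Measure.restrict_union hst ht, add_comm]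

lemma measure_smul_cond (hs₀ : μ s ≠ 0) : μ s • μ[|s] = μ.restrict s := by
  rw [ProbabilityTheory.cond, smul_smul, ENNReal.mul_inv_cancel hs₀ (measure_ne_top μ s),
    one_smul]

lemma spreadPlan_map_snd (ht : MeasurableSet t) (ht₀ : μ t ≠ 0) (hst : Disjoint s t) :
    (spreadPlan μ s t).map Prod.snd = μ (s ∪ t) • μ[|t] := by
  rw [spreadPlan, Measure.map_add _ _ measurable_snd, Measure.map_map measurable_snd
    measurable_diag, Function.snd_comp_diag, Measure.map_id, Measure.map_snd_prod,
    Measure.restrict_apply_univ, measure_union hst ht, add_smul, measure_smul_cond ht₀, add_comm]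

end SpreadPlan

lemma WpCost_le_lintegral {p : ℝ} {μ ν : Measure ℝ} [IsProbabilityMeasure μ]
    {π : Measure (ℝ × ℝ)} (hπ₁ : π.map Prod.fst = μ) (hπ₂ : π.map Prod.snd = ν) :
    WpCost p μ ν ≤ ∫⁻ q, ENNReal.ofReal (|q.1 - q.2| ^ p) ∂π := by
  have : IsProbabilityMeasure π := by
    constructor
    rw [← preimage_univ (f := Prod.fst), ← Measure.map_apply measurable_fst .univ, hπ₁,
      measure_univ]
  exact sInf_le ⟨π, this, hπ₁, hπ₂, rfl⟩

lemma ofReal_abs_sub_rpow_le {p x y : ℝ} (hp : 0 ≤ p) (hy : y ∈ uIcc 0 x) :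
    ENNReal.ofReal (|x - y| ^ p) ≤ ENNReal.ofReal (|x| ^ p) := by
  have h := abs_sub_right_of_mem_uIcc hy
  rw [sub_zero] at h
  gcongr

section Compactify

variable {μ : Measure ℝ} [IsProbabilityMeasure μ] [NullSingletonClass μ] {ε : ℝ}

lemma quantile_nonpos_of_median (hε : ε ∈ Ioo (0:ℝ) (1/2)) (hmed : quantile μ (1/2) = 0) :
    quantile μ ε ≤ 0 :=
  hmed ▸ quantile_le_quantile hε.1 hε.2.le (by norm_num)

lemma quantile_one_sub_nonneg_of_median (hε : ε ∈ Ioo (0:ℝ) (1/2))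
    (hmed : quantile μ (1/2) = 0) : 0 ≤ quantile μ (1 - ε) :=
  hmed ▸ quantile_le_quantile (by norm_num) (by linarith [hε.2]) (by linarith [hε.1])

lemma measure_Icc_quantile_zero (hε : ε ∈ Ioo (0:ℝ) (1/2)) (hmed : quantile μ (1/2) = 0) :
    μ (Icc (quantile μ ε) 0) = ENNReal.ofReal (1/2 - ε) := by
  rw [← hmed, measure_Icc_quantile hε.1 hε.2.le (by norm_num)]

lemma measure_Ioc_zero_quantile (hε : ε ∈ Ioo (0:ℝ) (1/2)) (hmed : quantile μ (1/2) = 0) :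
    μ (Ioc 0 (quantile μ (1 - ε))) = ENNReal.ofReal (1/2 - ε) := by
  rw [measure_congr Ioc_ae_eq_Icc, ← hmed,
    measure_Icc_quantile (by norm_num) (by linarith [hε.2]) (by linarith [hε.1])]
  ring_nf

lemma compactify_eq_add_smul_cond (hε : ε ∈ Ioo (0:ℝ) (1/2)) (hmed : quantile μ (1/2) = 0) :
    compactify ε μ = μ (Iic 0) • μ[|Icc (quantile μ ε) 0]
      + μ (Ioi 0) • μ[|Ioc 0 (quantile μ (1 - ε))] := by
  have hL : μ (Iic 0) = ENNReal.ofReal (1/2) := by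
    rw [← hmed, measure_Iic_quantile (by norm_num) (by norm_num)]
  have hR : μ (Ioi 0) = ENNReal.ofReal (1/2) := by
    rw [← compl_Iic, prob_compl_eq_one_sub measurableSet_Iic, hL, ← ENNReal.ofReal_one,
      ← ENNReal.ofReal_sub _ (by norm_num)]
    norm_num
  have hcoef : (ENNReal.ofReal (1 - 2 * ε))⁻¹
      = ENNReal.ofReal (1/2) * (ENNReal.ofReal (1/2 - ε))⁻¹ := by
    rw [← ENNReal.ofReal_inv_of_pos (by linarith [hε.2]),
      ← ENNReal.ofReal_inv_of_pos (by linarith [hε.2]), ← ENNReal.ofReal_mul (by norm_num)]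
    congr 1
    field_simp
  rw [compactify, hL, hR, ProbabilityTheory.cond, ProbabilityTheory.cond,
    measure_Icc_quantile_zero hε hmed, measure_Ioc_zero_quantile hε hmed, smul_smul, smul_smul,
    ← smul_add,
    ← Measure.restrict_union ((Iic_disjoint_Ioc le_rfl).mono_left Icc_subset_Iic_self)
      measurableSet_Ioc, Icc_union_Ioc_eq_Icc (quantile_nonpos_of_median hε hmed)
      (quantile_one_sub_nonneg_of_median hε hmed), hcoef]

noncomputable def compactifyPlan (ε : ℝ) (μ : Measure ℝ) : Measure (ℝ × ℝ) :=
  spreadPlan μ (Iio (quantile μ ε)) (Icc (quantile μ ε) 0)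
    + spreadPlan μ (Ioi (quantile μ (1 - ε))) (Ioc 0 (quantile μ (1 - ε)))

lemma compactifyPlan_map_fst (hε : ε ∈ Ioo (0:ℝ) (1/2)) (hmed : quantile μ (1/2) = 0) :
    (compactifyPlan ε μ).map Prod.fst = μ := by
  have hpos : ENNReal.ofReal (1/2 - ε) ≠ 0 := (ENNReal.ofReal_pos.2 (by linarith [hε.2])).ne'
  rw [compactifyPlan, Measure.map_add _ _ measurable_fst,
    spreadPlan_map_fst measurableSet_Icc (measure_Icc_quantile_zero hε hmed ▸ hpos)
      ((Iio_disjoint_Ici le_rfl).mono_right Icc_subset_Ici_self),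
    spreadPlan_map_fst measurableSet_Ioc (measure_Ioc_zero_quantile hε hmed ▸ hpos)
      Ioc_disjoint_Ioi_same.symm,
    Iio_union_Icc_eq_Iic (quantile_nonpos_of_median hε hmed), union_comm,
    Ioc_union_Ioi_eq_Ioi (quantile_one_sub_nonneg_of_median hε hmed), ← compl_Iic,
    Measure.restrict_add_restrict_compl measurableSet_Iic]

lemma compactifyPlan_map_snd (hε : ε ∈ Ioo (0:ℝ) (1/2)) (hmed : quantile μ (1/2) = 0) :
    (compactifyPlan ε μ).map Prod.snd = compactify ε μ := by
  have hpos : ENNReal.ofReal (1/2 - ε) ≠ 0 := (ENNReal.ofReal_pos.2 (by linarith [hε.2])).ne'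
  rw [compactifyPlan, Measure.map_add _ _ measurable_snd,
    spreadPlan_map_snd measurableSet_Icc (measure_Icc_quantile_zero hε hmed ▸ hpos)
      ((Iio_disjoint_Ici le_rfl).mono_right Icc_subset_Ici_self),
    spreadPlan_map_snd measurableSet_Ioc (measure_Ioc_zero_quantile hε hmed ▸ hpos)
      Ioc_disjoint_Ioi_same.symm,
    Iio_union_Icc_eq_Iic (quantile_nonpos_of_median hε hmed), union_comm,
    Ioc_union_Ioi_eq_Ioi (quantile_one_sub_nonneg_of_median hε hmed),
    compactify_eq_add_smul_cond hε hmed]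

end Compactify

lemma lintegral_compactifyPlan_le {p : ℝ} (hp : 0 < p) (ε : ℝ) (μ : Measure ℝ) :
    ∫⁻ q, ENNReal.ofReal (|q.1 - q.2| ^ p) ∂compactifyPlan ε μ
      ≤ ∫⁻ x in Iio (quantile μ ε), ENNReal.ofReal (|x| ^ p) ∂μ
        + ∫⁻ x in Ioi (quantile μ (1 - ε)), ENNReal.ofReal (|x| ^ p) ∂μ := by
  have hc : Measurable fun q : ℝ × ℝ => ENNReal.ofReal (|q.1 - q.2| ^ p) := by fun_prop
  have hc₀ (x : ℝ) : ENNReal.ofReal (|x - x| ^ p) = 0 := by simp [Real.zero_rpow hp.ne']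
  rw [compactifyPlan, lintegral_add_measure]
  gcongr
  · refine lintegral_spreadPlan_le hc hc₀ measurableSet_Iio measurableSet_Icc fun x hx y hy =>
      ofReal_abs_sub_rpow_le hp.le (mem_uIcc.2 (Or.inr ⟨by linarith [hx.out, hy.1], hy.2⟩))
  · refine lintegral_spreadPlan_le hc hc₀ measurableSet_Ioi measurableSet_Ioc fun x hx y hy =>
      ofReal_abs_sub_rpow_le hp.le (mem_uIcc.2 (Or.inl ⟨hy.1.le, by linarith [hx.out, hy.2]⟩))

theorem compactification_error_general (p ε : ℝ) (hp : 1 ≤ p) (hε : ε ∈ Ioo (0:ℝ) (1/2))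
    (μ : Measure ℝ) [IsProbabilityMeasure μ] [NullSingletonClass μ]
    (hmed : quantile μ (1/2) = 0) :
    WpCost p μ (compactify ε μ)
      ≤ ∫⁻ x in (Icc (quantile μ ε) (quantile μ (1 - ε)))ᶜ, ENNReal.ofReal (|x| ^ p) ∂μ := by
  have hab : quantile μ ε ≤ quantile μ (1 - ε) :=
    (quantile_nonpos_of_median hε hmed).trans (quantile_one_sub_nonneg_of_median hε hmed)
  calc WpCost p μ (compactify ε μ)
      ≤ ∫⁻ q, ENNReal.ofReal (|q.1 - q.2| ^ p) ∂compactifyPlan ε μ :=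
        WpCost_le_lintegral (compactifyPlan_map_fst hε hmed) (compactifyPlan_map_snd hε hmed)
    _ ≤ _ := lintegral_compactifyPlan_le (zero_lt_one.trans_le hp) ε μ
    _ = _ := by
        rw [← Ici_inter_Iic, compl_inter, compl_Ici, compl_Iic,
          lintegral_union measurableSet_Ioi (Ioi_disjoint_Iio_of_le hab).symm]

/-- For an atomless `μ ∈ 𝒫_p(ℝ)` with median `X_μ(1/2) = 0` and
`ε ∈ (0,1/2)`, one has `W_p(μ, C_ε μ)^p ≤ ∫_{I_ε^c} |x|^p dμ`. -/
theorem compactification_error (p ε : ℝ) (hp : 1 ≤ p) (hε : ε ∈ Ioo (0:ℝ) (1/2))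
    (μ : Measure ℝ) [IsProbabilityMeasure μ] [NullSingletonClass μ]
    (hmed : quantile μ (1/2) = 0)
    (hmom : (∫⁻ x, ENNReal.ofReal (|x| ^ p) ∂μ) < ⊤) :
    WpCost p μ (compactify ε μ)
      ≤ ∫⁻ x in (Icc (quantile μ ε) (quantile μ (1 - ε)))ᶜ, ENNReal.ofReal (|x| ^ p) ∂μ :=
  compactification_error_general p ε hp hε μ hmed
end

section
/- Let x ∈ 𝒦_N, v ∈ ℝ^{N+1}, and set μ^N := Σ_{i=0}^{N-1} R_i^N(x) 𝟙_{[x_i,x_{i+1})} ℒ¹ and ν^N := Σ_{i=0}^{N-1} v_i R_i^N(x) 𝟙_{[x_i,x_{i+1})} ℒ¹. Then the continuous action is controlled by the discrete one: Φ_{p,m}(μ^N, ν^N) ≤ ((N+1)/N) Φ^N_{p,m}(x, v). -/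
open Set MeasureTheory Filter
open scoped ENNReal NNReal Topology

/-- The cone `𝒦_N` of `N+1` ordered particles with consecutive gaps at least `1/(N M)`. -/
def InCone (N : ℕ) (M : ℝ) (x : Fin (N+1) → ℝ) : Prop :=
  ∀ i : Fin N, x i.castSucc + 1 / (N * M) ≤ x i.succ

/-- Reconstructed densities (for indices `i < N`). -/
noncomputable def Rrec (N : ℕ) (x : Fin (N+1) → ℝ) (i : Fin N) : ℝ :=
  1 / (N * (x i.succ - x i.castSucc))

/-- The action density `φ_{p,m}(ρ,j) = |j|^p / m(ρ)^{p-1}` (zero where `m(ρ) ≤ 0`). -/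
noncomputable def actionDensity (p : ℝ) (m : ℝ → ℝ) (ρ j : ℝ) : ℝ :=
  if 0 < m ρ then |j| ^ p / (m ρ) ^ (p - 1) else 0

/-- The piecewise-constant density associated to `x` with values `R_i^N(x)`,
weighted pointwise by `w i`. -/
noncomputable def pcFun (N : ℕ) (x : Fin (N+1) → ℝ) (w : Fin N → ℝ) (yy : ℝ) : ℝ :=
  ∑ i : Fin N, Set.indicator (Ico (x i.castSucc) (x i.succ))
    (fun _ => w i * Rrec N x i) yy

/-- The discrete action `Φ^N_{p,m}(x,v)`, with `R_N^N(x) = ρ*(x)`. -/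
noncomputable def PhiN (p : ℝ) (m : ℝ → ℝ) (N : ℕ) (ρstar : (Fin (N+1) → ℝ) → ℝ)
    (x v : Fin (N+1) → ℝ) : ℝ :=
  (1 / (N + 1 : ℝ)) *
    ((∑ i : Fin N, |v i.castSucc| ^ p / (m (Rrec N x i) / Rrec N x i) ^ (p - 1))
      + |v (Fin.last N)| ^ p / (m (ρstar x) / ρstar x) ^ (p - 1))

/-!
On the cell `[x_i, x_{i+1})` the pair `(μ^N, ν^N)` has the constant densities `R_i` and `v_i R_i`,
and both vanish off the cells, where `φ(0, 0) = 0`. Hence the continuous action is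
`∑_{i<N} (x_{i+1} - x_i) φ(R_i, v_i R_i)`. Since `φ(ρ, vρ) = ρ |v|^p / θ(ρ)^(p-1)` and
`(x_{i+1} - x_i) R_i = 1/N`, this is `1/N` times the first `N` terms of the discrete action,
whose last term is nonnegative.
-/

open Function

lemma pairwise_disjoint_Ico_castSucc_succ {α : Type*} [Preorder α] {N : ℕ} {x : Fin (N+1) → α}
    (hx : Monotone x) :
    Pairwise (Disjoint on fun i : Fin N => Ico (x i.castSucc) (x i.succ)) := fun i j hij => by
  simpa only [onFun, Fin.orderSucc_castSucc] using
    hx.pairwise_disjoint_on_Ico_succ ((Fin.castSucc_injective N).ne hij)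

section SumIndicator

variable {ι α β γ δ : Type*} [Fintype ι] {A : ι → Set α}

lemma sum_indicator_apply_of_mem [AddCommMonoid β] (hA : Pairwise (Disjoint on A))
    (b : ι → β) {y : α} {k : ι} (hk : y ∈ A k) :
    ∑ i, (A i).indicator (fun _ => b i) y = b k := by
  classical
  rw [Finset.sum_eq_single_of_mem k (Finset.mem_univ k) fun i _ hik =>
    indicator_of_notMem (disjoint_left.1 (hA hik.symm) hk) _]
  exact indicator_of_mem hk _

lemma apply_sum_indicator_of_pairwise_disjoint [AddCommMonoid β] [AddCommMonoid γ]
    [AddCommMonoid δ] (hA : Pairwise (Disjoint on A)) (F : β → γ → δ) (hF : F 0 0 = 0)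
    (b : ι → β) (c : ι → γ) (y : α) :
    F (∑ i, (A i).indicator (fun _ => b i) y) (∑ i, (A i).indicator (fun _ => c i) y)
      = ∑ i, (A i).indicator (fun _ => F (b i) (c i)) y := by
  by_cases hy : ∃ k, y ∈ A k
  · obtain ⟨k, hk⟩ := hy
    simp only [sum_indicator_apply_of_mem hA _ hk]
  · simp only [not_exists] at hy
    simp only [indicator_of_notMem (hy _), Finset.sum_const_zero, hF]

end SumIndicator

lemma integral_sum_indicator_Ico {ι : Type*} [Fintype ι] {a b : ι → ℝ} (hab : ∀ i, a i ≤ b i)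
    (c : ι → ℝ) :
    ∫ y, ∑ i, (Ico (a i) (b i)).indicator (fun _ => c i) y = ∑ i, (b i - a i) * c i := by
  rw [integral_finsetSum _ fun i _ =>
    (integrable_indicator_iff measurableSet_Ico).2 (integrableOn_const measure_Ico_lt_top.ne)]
  refine Finset.sum_congr rfl fun i _ => ?_
  rw [integral_indicator_const _ measurableSet_Ico, Real.volume_real_Ico_of_le (hab i),
    smul_eq_mul]

lemma actionDensity_mul_le (p : ℝ) {m : ℝ → ℝ} {ρ : ℝ} (hρ : 0 < ρ) (hm : 0 ≤ m ρ) (v : ℝ) :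
    actionDensity p m ρ (v * ρ) ≤ ρ * (|v| ^ p / (m ρ / ρ) ^ (p - 1)) := by
  unfold actionDensity
  split_ifs with hmρ
  · apply le_of_eq
    rw [abs_mul, abs_of_pos hρ, Real.mul_rpow (abs_nonneg v) hρ.le,
      Real.div_rpow hm hρ.le, Real.rpow_sub_one hρ.ne']
    field_simp
  · positivity

namespace InCone

variable {N : ℕ} {M : ℝ} {x : Fin (N+1) → ℝ}

lemma castSucc_lt_succ (hM : 0 < M) (hx : InCone N M x) (i : Fin N) :
    x i.castSucc < x i.succ := by
  have hN : (0 : ℝ) < N := by exact_mod_cast i.pos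
  have := hx i
  have : 0 < 1 / (N * M) := by positivity
  linarith

lemma monotone (hM : 0 < M) (hx : InCone N M x) : Monotone x :=
  (Fin.strictMono_iff_lt_succ.2 (hx.castSucc_lt_succ hM)).monotone

lemma Rrec_pos (hM : 0 < M) (hx : InCone N M x) (i : Fin N) : 0 < Rrec N x i := by
  have hN : (0 : ℝ) < N := by exact_mod_cast i.pos
  have := sub_pos.2 (hx.castSucc_lt_succ hM i)
  unfold Rrec
  positivity

lemma Rrec_le (hM : 0 < M) (hx : InCone N M x) (i : Fin N) : Rrec N x i ≤ M := by
  have hN : (0 : ℝ) < N := by exact_mod_cast i.pos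
  have hgap : 1 / (N * M) ≤ x i.succ - x i.castSucc := by linarith [hx i]
  have := sub_pos.2 (hx.castSucc_lt_succ hM i)
  unfold Rrec
  rw [div_le_iff₀ (by positivity)] at hgap ⊢
  linarith

end InCone

lemma sub_mul_Rrec {N : ℕ} {x : Fin (N+1) → ℝ} {i : Fin N} (h : x i.succ - x i.castSucc ≠ 0) :
    (x i.succ - x i.castSucc) * Rrec N x i = 1 / N := by
  unfold Rrec
  field_simp

theorem continuous_action_le_discrete_general (N : ℕ) (M p : ℝ)
    (hM : 0 < M)
    (m : ℝ → ℝ) (hm0 : m 0 = 0)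
    (hmnn : ∀ ρ ∈ Icc (0:ℝ) M, 0 ≤ m ρ)
    (ρstar : (Fin (N+1) → ℝ) → ℝ) (hρ : ∀ w, 0 ≤ ρstar w ∧ ρstar w ≤ M)
    (x v : Fin (N+1) → ℝ) (hx : InCone N M x) :
    (∫ yy : ℝ, actionDensity p m (pcFun N x (fun _ => 1) yy)
        (pcFun N x (fun i => v i.castSucc) yy))
      ≤ ((N + 1 : ℝ) / N) * PhiN p m N ρstar x v := by
  set t : Fin N → ℝ := fun i => |v i.castSucc| ^ p / (m (Rrec N x i) / Rrec N x i) ^ (p - 1)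
  have hgap := hx.castSucc_lt_succ hM
  have hlast : 0 ≤ |v (Fin.last N)| ^ p / (m (ρstar x) / ρstar x) ^ (p - 1) := by
    have := hmnn _ (hρ x)
    have := (hρ x).1
    positivity
  calc (∫ yy : ℝ, actionDensity p m (pcFun N x (fun _ => 1) yy)
          (pcFun N x (fun i => v i.castSucc) yy))
      = ∫ yy, ∑ i, (Ico (x i.castSucc) (x i.succ)).indicator
          (fun _ => actionDensity p m (1 * Rrec N x i) (v i.castSucc * Rrec N x i)) yy := by
        congr with yy
        exact apply_sum_indicator_of_pairwise_disjoint
          (pairwise_disjoint_Ico_castSucc_succ (hx.monotone hM)) _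
          (by simp [actionDensity, hm0]) _ _ yy
    _ = ∑ i, (x i.succ - x i.castSucc) *
          actionDensity p m (1 * Rrec N x i) (v i.castSucc * Rrec N x i) :=
        integral_sum_indicator_Ico (fun i => (hgap i).le) _
    _ ≤ ∑ i, (x i.succ - x i.castSucc) * (Rrec N x i * t i) := by
        gcongr with i
        · exact (sub_pos.2 (hgap i)).le
        rw [one_mul]
        exact actionDensity_mul_le p (hx.Rrec_pos hM i)
          (hmnn _ ⟨(hx.Rrec_pos hM i).le, hx.Rrec_le hM i⟩) _
    _ = 1 / N * ∑ i, t i := by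
        simp_rw [Finset.mul_sum, ← mul_assoc, sub_mul_Rrec (sub_pos.2 (hgap _)).ne']
    _ ≤ 1 / N * (∑ i, t i + |v (Fin.last N)| ^ p / (m (ρstar x) / ρstar x) ^ (p - 1)) := by
        gcongr
        exact le_add_of_nonneg_right hlast
    _ = ((N + 1 : ℝ) / N) * PhiN p m N ρstar x v := by
        rw [PhiN]
        field_simp
        rfl

/-- the continuous action of the piecewise-constant density/momentum pair
associated to `(x,v)` is controlled by the discrete action:
`Φ_{p,m}(μ^N, ν^N) ≤ (N+1)/N · Φ^N_{p,m}(x,v)`. -/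
theorem continuous_action_le_discrete (N : ℕ) (hN : 1 ≤ N) (M p : ℝ)
    (hM : 0 < M) (hp : 1 < p)
    (m : ℝ → ℝ) (hconc : ConcaveOn ℝ (Icc 0 M) m) (hm0 : m 0 = 0)
    (hmnn : ∀ ρ ∈ Icc (0:ℝ) M, 0 ≤ m ρ)
    (ρstar : (Fin (N+1) → ℝ) → ℝ) (hρ : ∀ w, 0 ≤ ρstar w ∧ ρstar w ≤ M)
    (x v : Fin (N+1) → ℝ) (hx : InCone N M x) :
    (∫ yy : ℝ, actionDensity p m (pcFun N x (fun _ => 1) yy)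
        (pcFun N x (fun i => v i.castSucc) yy))
      ≤ ((N + 1 : ℝ) / N) * PhiN p m N ρstar x v :=
  continuous_action_le_discrete_general N M p hM m hm0 hmnn ρstar hρ x v hx
end
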